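/- arXiv:2306.11506 — 7 statements merged into one kernel-verified Lean document; each statement's English description precedes it below -/
import Mathlib

section
/- Let v ∈ ℤ^n with maximum M of multiplicity μ_M. If t > (μ_M + √(μ_M² + 4(n - μ_M)))/2, then 0 ≤ L_v(t) - M < 1; consequently ⌊L_v(t)⌋ = M. -/
open Real Finset

theorem stmt_6 (n : ℕ) (hn : 0 < n) (v : Fin n → ℤ) (M : ℤ)
    (hM : IsGreatest (Set.range v) M)
    (μ : ℕ) (hμ : μ = (Finset.univ.filter (fun i => v i = M)).card)
    (t : ℝ) (ht : ((μ : ℝ) + Real.sqrt ((μ : ℝ)^2 + 4 * ((n : ℝ) - μ))) / 2 < t) :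
    (0 ≤ Real.log (∑ j, t ^ (v j : ℝ)) / Real.log t - (M : ℝ)
      ∧ Real.log (∑ j, t ^ (v j : ℝ)) / Real.log t - (M : ℝ) < 1)
      ∧ ⌊Real.log (∑ j, t ^ (v j : ℝ)) / Real.log t⌋ = M := by
  obtain ⟨⟨i0, hi0⟩, hub⟩ := hM
  have hvle : ∀ j, v j ≤ M := fun j => hub ⟨j, rfl⟩
  have hμpos : 0 < μ := by
    rw [hμ]; exact Finset.card_pos.mpr ⟨i0, by simp [hi0]⟩
  have hμn : μ ≤ n := by
    rw [hμ]
    calc (Finset.univ.filter (fun i => v i = M)).card ≤ (Finset.univ : Finset (Fin n)).card :=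
      Finset.card_filter_le _ _
    _ = n := by simp
  have hμ1 : (1:ℝ) ≤ (μ:ℝ) := by exact_mod_cast hμpos
  have hb : (0:ℝ) ≤ (n:ℝ) - μ := by
    have : (μ:ℝ) ≤ (n:ℝ) := by exact_mod_cast hμn
    linarith
  have hsqnn : (0:ℝ) ≤ (μ:ℝ)^2 + 4*((n:ℝ)-μ) := by positivity
  have hsq := Real.sq_sqrt hsqnn
  have hsnn := Real.sqrt_nonneg ((μ:ℝ)^2 + 4*((n:ℝ)-μ))
  have hkey : (μ:ℝ)*t + ((n:ℝ)-μ) < t^2 := by nlinarith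
  have ht0 : 0 < t := by linarith
  have ht1 : 1 < t := by nlinarith
  have hlogt : 0 < Real.log t := Real.log_pos ht1
  set S := ∑ j, t ^ (v j : ℝ) with hS
  have hpos : ∀ j : Fin n, 0 < t ^ (v j : ℝ) := fun j => Real.rpow_pos_of_pos ht0 _
  have hlow : t ^ (M:ℝ) ≤ S := by
    have := Finset.single_le_sum (f := fun j => t ^ (v j : ℝ))
      (fun j _ => (hpos j).le) (Finset.mem_univ i0)
    simp only [hi0] at this
    exact this
  have hSpos : 0 < S := lt_of_lt_of_le (Real.rpow_pos_of_pos ht0 _) hlow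
  -- upper bound
  have hsplit := Finset.sum_filter_add_sum_filter_not Finset.univ (fun i => v i = M)
      (fun j => t ^ (v j : ℝ))
  have h1 : ∑ j ∈ Finset.univ.filter (fun i => v i = M), t ^ (v j : ℝ)
      = (μ:ℝ) * t ^ (M:ℝ) := by
    calc ∑ j ∈ Finset.univ.filter (fun i => v i = M), t ^ (v j : ℝ)
        = ∑ _j ∈ Finset.univ.filter (fun i => v i = M), t ^ (M : ℝ) :=
          Finset.sum_congr rfl (fun j hj => by rw [(Finset.mem_filter.mp hj).2])
      _ = (μ:ℝ) * t ^ (M:ℝ) := by rw [Finset.sum_const, nsmul_eq_mul, hμ]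
  have h2 : ∑ j ∈ Finset.univ.filter (fun i => ¬ v i = M), t ^ (v j : ℝ)
      ≤ ((n:ℝ) - μ) * t ^ ((M:ℝ) - 1) := by
    have hcard : ((Finset.univ.filter (fun i => ¬ v i = M)).card : ℝ) = (n:ℝ) - μ := by
      have := Finset.card_filter_add_card_filter_not
        (s := (Finset.univ : Finset (Fin n))) (p := fun i => v i = M)
      simp only [Finset.card_univ, Fintype.card_fin] at this
      have h' : μ + (Finset.univ.filter (fun i => ¬ v i = M)).card = n := by
        rw [hμ]; exact this
      push_cast [← h']; ring
    calc ∑ j ∈ Finset.univ.filter (fun i => ¬ v i = M), t ^ (v j : ℝ)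
        ≤ ∑ _j ∈ Finset.univ.filter (fun i => ¬ v i = M), t ^ ((M:ℝ) - 1) := by
          apply Finset.sum_le_sum
          intro j hj
          rw [Finset.mem_filter] at hj
          apply Real.rpow_le_rpow_of_exponent_le ht1.le
          have : v j ≤ M - 1 := by
            have := hvle j
            omega
          have : ((v j : ℝ)) ≤ ((M:ℝ) - 1) := by exact_mod_cast this
          linarith
      _ = ((n:ℝ) - μ) * t ^ ((M:ℝ) - 1) := by
          rw [Finset.sum_const, nsmul_eq_mul, hcard]
  have hup : S < t ^ ((M:ℝ) + 1) := by
    have hSle : S ≤ (μ:ℝ) * t ^ (M:ℝ) + ((n:ℝ) - μ) * t ^ ((M:ℝ) - 1) := by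
      rw [hS, ← hsplit, h1]
      linarith [h2]
    have e1 : t ^ (M:ℝ) = t ^ ((M:ℝ) - 1) * t := by
      rw [← Real.rpow_add_one ht0.ne']; ring_nf
    have e2 : t ^ ((M:ℝ) + 1) = t ^ ((M:ℝ) - 1) * t^2 := by
      rw [← Real.rpow_natCast t 2, ← Real.rpow_add ht0]
      congr 1
      push_cast; ring
    have hp : 0 < t ^ ((M:ℝ) - 1) := Real.rpow_pos_of_pos ht0 _
    calc S ≤ (μ:ℝ) * t ^ (M:ℝ) + ((n:ℝ) - μ) * t ^ ((M:ℝ) - 1) := hSle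
      _ = t ^ ((M:ℝ) - 1) * ((μ:ℝ)*t + ((n:ℝ)-μ)) := by rw [e1]; ring
      _ < t ^ ((M:ℝ) - 1) * t^2 := by
          exact mul_lt_mul_of_pos_left hkey hp
      _ = t ^ ((M:ℝ) + 1) := e2.symm
  have hloglow : (M:ℝ) * Real.log t ≤ Real.log S := by
    have := Real.log_le_log (Real.rpow_pos_of_pos ht0 _) hlow
    rwa [Real.log_rpow ht0] at this
  have hlogup : Real.log S < ((M:ℝ) + 1) * Real.log t := by
    have := Real.log_lt_log hSpos hup
    rwa [Real.log_rpow ht0] at this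
  have hL1 : (M:ℝ) ≤ Real.log S / Real.log t := (le_div_iff₀ hlogt).mpr hloglow
  have hL2 : Real.log S / Real.log t < (M:ℝ) + 1 := (div_lt_iff₀ hlogt).mpr hlogup
  refine ⟨⟨by linarith, by linarith⟩, ?_⟩
  rw [Int.floor_eq_iff]
  exact ⟨hL1, by push_cast; linarith⟩
end

section
/- For every v ∈ ℤ^n, one has ⌊L_v(n+1)⌋ = max_i v_i, where L_v(t) = log_t(∑_{j=1}^n t^{v_j}). -/
open Real Finset

theorem stmt_7 (n : ℕ) (hn : 0 < n) (v : Fin n → ℤ) (M : ℤ)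
    (hM : IsGreatest (Set.range v) M) :
    ⌊Real.log (∑ j, ((n : ℝ) + 1) ^ (v j : ℝ)) / Real.log ((n : ℝ) + 1)⌋ = M := by
  set t : ℝ := (n : ℝ) + 1 with ht_def
  have ht1 : (1 : ℝ) < t := by
    have : (1 : ℝ) ≤ (n : ℝ) := by exact_mod_cast hn
    simp only [ht_def]; linarith
  have ht0 : (0 : ℝ) < t := by linarith
  have hlogt : 0 < Real.log t := Real.log_pos ht1
  obtain ⟨⟨j0, hj0⟩, hub⟩ := hM
  set S : ℝ := ∑ j, t ^ (v j : ℝ) with hS_def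
  have hterm_pos : ∀ j : Fin n, 0 < t ^ (v j : ℝ) := fun j => Real.rpow_pos_of_pos ht0 _
  have hlow : t ^ (M : ℝ) ≤ S := by
    have := Finset.single_le_sum (f := fun j => t ^ (v j : ℝ))
      (fun j _ => (hterm_pos j).le) (Finset.mem_univ j0)
    simp only [hj0] at this
    exact this
  have hhigh : S < t ^ ((M : ℝ) + 1) := by
    have hle : S ≤ (n : ℝ) * t ^ (M : ℝ) := by
      calc S ≤ ∑ _j : Fin n, t ^ (M : ℝ) := by
              apply Finset.sum_le_sum
              intro j _
              exact Real.rpow_le_rpow_of_exponent_le ht1.le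
                (by exact_mod_cast hub ⟨j, rfl⟩)
        _ = (n : ℝ) * t ^ (M : ℝ) := by simp [Finset.sum_const, mul_comm]
    have hlt : (n : ℝ) * t ^ (M : ℝ) < t * t ^ (M : ℝ) := by
      apply mul_lt_mul_of_pos_right _ (Real.rpow_pos_of_pos ht0 _)
      simp only [ht_def]; linarith
    calc S ≤ (n : ℝ) * t ^ (M : ℝ) := hle
      _ < t * t ^ (M : ℝ) := hlt
      _ = t ^ ((M : ℝ) + 1) := by
          rw [Real.rpow_add ht0, Real.rpow_one, mul_comm]
  have hSpos : 0 < S := lt_of_lt_of_le (Real.rpow_pos_of_pos ht0 _) hlow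
  rw [Int.floor_eq_iff]
  constructor
  · rw [le_div_iff₀ hlogt]
    have := Real.log_le_log (Real.rpow_pos_of_pos ht0 _) hlow
    rwa [Real.log_rpow ht0] at this
  · rw [div_lt_iff₀ hlogt]
    have h := Real.log_lt_log hSpos hhigh
    rw [Real.log_rpow ht0] at h
    linarith
end

section
/- Let v ∈ ℤ^n with strict second-largest value (i.e., not all entries equal). If t > e and t > (n - μ_M)/μ_M, then 0 ≤ M - R_v(t) < 1, where R_v(t) = (∑_j v_j t^{v_j})/(∑_j t^{v_j}), M = max_i v_i, and μ_M is the multiplicity of M. Consequently ⌈R_v(t)⌉ = M. -/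
open Real Finset

theorem stmt_8 (n : ℕ) (hn : 0 < n) (v : Fin n → ℤ)
    (hne : ∃ i j, v i ≠ v j)
    (M : ℤ) (hM : IsGreatest (Set.range v) M)
    (μ : ℕ) (hμ : μ = (Finset.univ.filter (fun i => v i = M)).card)
    (t : ℝ) (hte : Real.exp 1 < t) (ht : ((n : ℝ) - μ) / μ < t) :
    (0 ≤ (M : ℝ) - (∑ j, (v j : ℝ) * t ^ (v j : ℝ)) / (∑ j, t ^ (v j : ℝ))
      ∧ (M : ℝ) - (∑ j, (v j : ℝ) * t ^ (v j : ℝ)) / (∑ j, t ^ (v j : ℝ)) < 1)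
      ∧ ⌈(∑ j, (v j : ℝ) * t ^ (v j : ℝ)) / (∑ j, t ^ (v j : ℝ))⌉ = M := by
  have ht1 : (1:ℝ) < t := lt_trans (by simpa using Real.exp_lt_exp.mpr one_pos) hte
  have ht0 : (0:ℝ) < t := lt_trans one_pos ht1
  set S := ∑ j, t ^ (v j : ℝ) with hSdef
  set N := ∑ j, (v j : ℝ) * t ^ (v j : ℝ) with hNdef
  have hSpos : 0 < S :=
    Finset.sum_pos (fun j _ => Real.rpow_pos_of_pos ht0 _) ⟨⟨0, hn⟩, Finset.mem_univ _⟩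
  have hle : ∀ j, v j ≤ M := fun j => hM.2 ⟨j, rfl⟩
  have expand : ∑ j, ((M:ℝ) - (v j : ℝ)) * t ^ (v j : ℝ) = M * S - N := by
    simp [sub_mul, Finset.sum_sub_distrib, Finset.mul_sum, hSdef, hNdef]
  have key : (M:ℝ) - N / S = (∑ j, ((M:ℝ) - (v j : ℝ)) * t ^ (v j : ℝ)) / S := by
    rw [expand]; field_simp
  set A := Finset.univ.filter (fun i => v i = M) with hA
  have hμpos : 0 < μ := by
    obtain ⟨i, hi⟩ := hM.1
    rw [hμ]
    exact Finset.card_pos.mpr ⟨i, by simp [hA, hi]⟩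
  have hμn : μ ≤ n := by
    rw [hμ]; simpa using Finset.card_le_univ A
  have hcardc : ((Aᶜ).card : ℝ) = (n : ℝ) - μ := by
    have : (Aᶜ).card = n - μ := by
      rw [Finset.card_compl, hμ]; simp
    rw [this]
    push_cast [Nat.cast_sub hμn]
    ring
  -- term bound
  have termbound : ∀ j ∈ Aᶜ, ((M:ℝ) - (v j : ℝ)) * t ^ (v j : ℝ) ≤ t ^ ((M:ℝ) - 1) := by
    intro j hj
    have hjne : v j ≠ M := by simpa [hA] using hj
    have hjlt : v j ≤ M - 1 := by
      have := hle j
      omega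
    set d : ℝ := (M:ℝ) - (v j : ℝ) with hd
    have hd1 : 1 ≤ d := by
      have : ((v j : ℝ)) ≤ (M:ℝ) - 1 := by exact_mod_cast (by exact_mod_cast hjlt : (v j : ℝ) ≤ ((M - 1 : ℤ) : ℝ))
      simp [hd]; linarith
    have hdle : d ≤ t ^ (d - 1) := by
      have h1 : d ≤ Real.exp (d - 1) := by
        have := Real.add_one_le_exp (d - 1)
        linarith
      have h2 : Real.exp (d - 1) ≤ t ^ (d - 1) := by
        rw [← Real.exp_one_rpow (d - 1)]
        exact Real.rpow_le_rpow (Real.exp_pos 1).le hte.le (by linarith)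
      linarith
    have hsplit : t ^ ((M:ℝ) - 1) = t ^ ((v j : ℝ)) * t ^ (d - 1) := by
      rw [← Real.rpow_add ht0]
      congr 1
      simp [hd]; ring
    rw [hsplit]
    have hx : (0:ℝ) < t ^ ((v j : ℝ)) := Real.rpow_pos_of_pos ht0 _
    calc d * t ^ ((v j : ℝ)) = t ^ ((v j : ℝ)) * d := by ring
      _ ≤ t ^ ((v j : ℝ)) * t ^ (d - 1) := by
          exact mul_le_mul_of_nonneg_left hdle hx.le
  have hsumA : ∑ j ∈ A, t ^ (v j : ℝ) = (μ : ℝ) * t ^ ((M:ℝ)) := by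
    rw [Finset.sum_congr rfl (fun j hj => by
      have : v j = M := by simpa [hA] using hj
      rw [this])]
    rw [Finset.sum_const, hμ, nsmul_eq_mul]
  have hnum_nonneg : 0 ≤ ∑ j, ((M:ℝ) - (v j : ℝ)) * t ^ (v j : ℝ) :=
    Finset.sum_nonneg fun j _ => mul_nonneg
      (by have h := hle j; exact sub_nonneg.mpr (by exact_mod_cast h))
      (Real.rpow_pos_of_pos ht0 _).le
  have hnum_lt : ∑ j, ((M:ℝ) - (v j : ℝ)) * t ^ (v j : ℝ) < S := by
    have hsplitsum : ∑ j, ((M:ℝ) - (v j : ℝ)) * t ^ (v j : ℝ)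
        = ∑ j ∈ Aᶜ, ((M:ℝ) - (v j : ℝ)) * t ^ (v j : ℝ) := by
      rw [← Finset.sum_add_sum_compl A]
      have : ∑ j ∈ A, ((M:ℝ) - (v j : ℝ)) * t ^ (v j : ℝ) = 0 := by
        apply Finset.sum_eq_zero
        intro j hj
        have : v j = M := by simpa [hA] using hj
        rw [this]; ring
      rw [this, zero_add]
    have hb1 : ∑ j ∈ Aᶜ, ((M:ℝ) - (v j : ℝ)) * t ^ (v j : ℝ)
        ≤ ((Aᶜ).card : ℝ) * t ^ ((M:ℝ) - 1) := by
      have := Finset.sum_le_card_nsmul (Aᶜ) _ _ termbound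
      simpa [nsmul_eq_mul] using this
    have hb2 : ((n : ℝ) - μ) * t ^ ((M:ℝ) - 1) < (μ : ℝ) * t ^ ((M:ℝ)) := by
      have hμR : (0:ℝ) < (μ : ℝ) := by exact_mod_cast hμpos
      have h1 : (n : ℝ) - μ < t * μ := by
        have := (div_lt_iff₀ hμR).mp ht
        linarith
      have htM : t ^ ((M:ℝ)) = t ^ ((M:ℝ) - 1) * t := by
        rw [← Real.rpow_add_one ht0.ne']
        congr 1; ring
      have hp : (0:ℝ) < t ^ ((M:ℝ) - 1) := Real.rpow_pos_of_pos ht0 _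
      rw [htM]
      nlinarith
    have hb3 : (μ : ℝ) * t ^ ((M:ℝ)) ≤ S := by
      rw [← hsumA, hSdef, ← Finset.sum_add_sum_compl A]
      have : 0 ≤ ∑ j ∈ Aᶜ, t ^ (v j : ℝ) :=
        Finset.sum_nonneg fun j _ => (Real.rpow_pos_of_pos ht0 _).le
      linarith
    calc ∑ j, ((M:ℝ) - (v j : ℝ)) * t ^ (v j : ℝ)
        = ∑ j ∈ Aᶜ, ((M:ℝ) - (v j : ℝ)) * t ^ (v j : ℝ) := hsplitsum
      _ ≤ ((Aᶜ).card : ℝ) * t ^ ((M:ℝ) - 1) := hb1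
      _ = ((n : ℝ) - μ) * t ^ ((M:ℝ) - 1) := by rw [hcardc]
      _ < (μ : ℝ) * t ^ ((M:ℝ)) := hb2
      _ ≤ S := hb3
  have h0 : 0 ≤ (M:ℝ) - N / S := by
    rw [key]
    exact div_nonneg hnum_nonneg hSpos.le
  have h1 : (M:ℝ) - N / S < 1 := by
    rw [key]
    rw [div_lt_one hSpos]
    exact hnum_lt
  refine ⟨⟨h0, h1⟩, ?_⟩
  rw [Int.ceil_eq_iff]
  constructor
  · push_cast; linarith
  · linarith
end

section
/- For v ∈ ℚ^n, δ > 0, t > e^{1/g_2}, and t > ((n - μ_M)·g_2/(δ·μ_M))^{1/g_2}, one has 0 ≤ M - R_v(t) < δ, where M = max v, μ_M is the multiplicity of M, g_2 is the gap between M and the second largest distinct value of v (assume v has at least two distinct values), and R_v(t) = (∑_j v_j t^{v_j})/(∑_j t^{v_j}). -/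
/-!
Write `S = ∑ⱼ vⱼ t^vⱼ` and `T = ∑ⱼ t^vⱼ`. Then `M - S / T = (∑ⱼ (M - vⱼ) t^vⱼ) / T`, a quotient of
nonnegative quantities. Every nonzero term of the numerator has `M - vⱼ ≥ g₂`, and for
`t ≥ e^{1/g₂}` the map `x ↦ x t^{-x}` is decreasing on `[g₂, ∞)`, so each such term is at most
`g₂ t^{M - g₂}`. Since `T ≥ μ_M t^M`, the quotient is at most `(n - μ_M) g₂ / (μ_M t^{g₂})`,
which is `< δ` by the lower bound on `t`.
-/

open Real Finset

lemma le_mul_rpow_sub_of_exp_inv_le {g x t : ℝ} (hg : 0 < g) (hgx : g ≤ x) (ht : exp g⁻¹ ≤ t) :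
    x ≤ g * t ^ (x - g) := by
  have ht0 : 0 < t := (exp_pos _).trans_le ht
  have hlog : g⁻¹ ≤ log t := (le_log_iff_exp_le ht0).2 ht
  calc x = g * ((x - g) / g + 1) := by field_simp; ring
    _ ≤ g * exp ((x - g) / g) := by gcongr; exact add_one_le_exp _
    _ ≤ g * exp (log t * (x - g)) := by
        rw [div_eq_mul_inv, mul_comm _ g⁻¹]
        gcongr
    _ = g * t ^ (x - g) := by rw [rpow_def_of_pos ht0]

section WeightedByPowers

variable {ι : Type*} [Fintype ι] (w : ι → ℝ) {M g t : ℝ}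

lemma sub_div_sum_rpow_eq (hT : ∑ i, t ^ w i ≠ 0) :
    M - (∑ i, w i * t ^ w i) / ∑ i, t ^ w i = (∑ i, (M - w i) * t ^ w i) / ∑ i, t ^ w i := by
  rw [eq_div_iff hT, sub_mul, div_mul_cancel₀ _ hT, mul_sum]
  simp only [sub_mul, sum_sub_distrib]

lemma sum_sub_mul_rpow_le (hg : 0 < g) (ht : exp g⁻¹ ≤ t)
    (hgap : ∀ i, w i ≠ M → g ≤ M - w i) :
    ∑ i, (M - w i) * t ^ w i ≤ #{i | w i ≠ M} * (g * t ^ (M - g)) := by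
  have ht0 : 0 < t := (exp_pos _).trans_le ht
  rw [← sum_filter_of_ne (p := fun i => w i ≠ M) fun i _ h hi => h (by simp [hi]),
    ← nsmul_eq_mul]
  refine sum_le_card_nsmul _ _ _ fun i hi => ?_
  have hi := (mem_filter.1 hi).2
  calc (M - w i) * t ^ w i ≤ g * t ^ (M - w i - g) * t ^ w i := by
        gcongr
        exact le_mul_rpow_sub_of_exp_inv_le hg (hgap i hi) ht
    _ = g * t ^ (M - g) := by rw [mul_assoc, ← rpow_add ht0]; ring_nf

lemma card_filter_eq_mul_rpow_le_sum (ht : 0 ≤ t) :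
    #{i | w i = M} * t ^ M ≤ ∑ i, t ^ w i := by
  calc #{i | w i = M} * t ^ M = ∑ i with w i = M, t ^ w i := by
        rw [sum_congr rfl fun i hi => by rw [(mem_filter.1 hi).2], sum_const, nsmul_eq_mul]
    _ ≤ ∑ i, t ^ w i :=
        sum_le_sum_of_subset_of_nonneg (filter_subset _ _) fun i _ _ => rpow_nonneg ht _

theorem sub_div_sum_rpow_mem_Ico {δ : ℝ} (hM : ∃ i, w i = M) (hg : 0 < g)
    (hgap : ∀ i, w i ≠ M → g ≤ M - w i) (hδ : 0 < δ) (hte : exp g⁻¹ < t)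
    (ht : ((Fintype.card ι - #{i | w i = M}) * g / (δ * #{i | w i = M})) ^ g⁻¹ < t) :
    0 ≤ M - (∑ i, w i * t ^ w i) / ∑ i, t ^ w i ∧
      M - (∑ i, w i * t ^ w i) / ∑ i, t ^ w i < δ := by
  obtain ⟨i₀, hi₀⟩ := hM
  have ht0 : 0 < t := (exp_pos _).trans hte
  have hT : 0 < ∑ i, t ^ w i := sum_pos (fun i _ => rpow_pos_of_pos ht0 _) ⟨i₀, mem_univ _⟩
  have hμ : (0 : ℝ) < #{i | w i = M} := by
    exact_mod_cast card_pos.2 ⟨i₀, mem_filter.2 ⟨mem_univ _, hi₀⟩⟩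
  have hk : (#{i | w i ≠ M} : ℝ) = Fintype.card ι - #{i | w i = M} := by
    rw [eq_sub_iff_add_eq, ← Nat.cast_add, add_comm, card_filter_add_card_filter_not, card_univ]
  have hpow : #{i | w i ≠ M} * g / (δ * #{i | w i = M}) < t ^ g := by
    rw [← hk] at ht
    exact (rpow_inv_lt_iff_of_pos (by positivity) ht0.le hg).1 ht
  have hnum : ∑ i, (M - w i) * t ^ w i < δ * ∑ i, t ^ w i :=
    calc ∑ i, (M - w i) * t ^ w i ≤ #{i | w i ≠ M} * (g * t ^ (M - g)) :=
          sum_sub_mul_rpow_le w hg hte.le hgap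
      _ < δ * #{i | w i = M} * t ^ g * t ^ (M - g) := by
          rw [div_lt_iff₀ (by positivity)] at hpow
          rw [← mul_assoc]
          exact mul_lt_mul_of_pos_right (by linarith) (rpow_pos_of_pos ht0 _)
      _ = δ * (#{i | w i = M} * t ^ M) := by rw [mul_assoc, ← rpow_add ht0]; ring_nf
      _ ≤ δ * ∑ i, t ^ w i := by gcongr; exact card_filter_eq_mul_rpow_le_sum w ht0.le
  have hterm : ∀ i, 0 ≤ (M - w i) * t ^ w i := fun i => by
    refine mul_nonneg ?_ (rpow_nonneg ht0.le _)
    by_cases h : w i = M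
    · rw [h, sub_self]
    · linarith [hgap i h]
  rw [sub_div_sum_rpow_eq w hT.ne', div_lt_iff₀ hT]
  exact ⟨div_nonneg (sum_nonneg fun i _ => hterm i) hT.le, hnum⟩

end WeightedByPowers

theorem stmt_10_general (n : ℕ) (v : Fin n → ℚ) (M : ℚ)
    (hM : IsGreatest (Set.range v) M)
    (μ : ℕ) (hμ : μ = (Finset.univ.filter (fun i => v i = M)).card)
    (hS : (Finset.univ.filter (fun i => v i < M)).Nonempty)
    (g₂ : ℚ)
    (hg₂ : g₂ = M - (Finset.univ.filter (fun i => v i < M)).sup' hS v)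
    (δ t : ℝ) (hδ : 0 < δ)
    (hte : Real.exp (1 / (g₂ : ℝ)) < t)
    (ht : (((n : ℝ) - μ) * (g₂ : ℝ) / (δ * μ)) ^ (1 / (g₂ : ℝ)) < t) :
    0 ≤ (M : ℝ) - (∑ j, (v j : ℝ) * t ^ (v j : ℝ)) / (∑ j, t ^ (v j : ℝ))
      ∧ (M : ℝ) - (∑ j, (v j : ℝ) * t ^ (v j : ℝ)) / (∑ j, t ^ (v j : ℝ)) < δ := by
  have hle : ∀ j, v j ≤ M := fun j => hM.2 ⟨j, rfl⟩
  have hg : (0 : ℝ) < g₂ := by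
    have := (sup'_lt_iff hS).2 fun i hi => (mem_filter.1 hi).2
    exact_mod_cast (by linarith : (0 : ℚ) < g₂)
  have hgap : ∀ j, (v j : ℝ) ≠ M → (g₂ : ℝ) ≤ M - v j := fun j hj => by
    have hlt : v j < M := (hle j).lt_of_ne (mod_cast hj)
    have := le_sup' v (mem_filter.2 ⟨mem_univ j, hlt⟩ : j ∈ univ.filter fun i => v i < M)
    exact_mod_cast (by linarith : g₂ ≤ M - v j)
  have hcard : #{j | (v j : ℝ) = M} = μ := by simp only [Rat.cast_inj]; exact hμ.symm
  obtain ⟨i₀, hi₀⟩ := hM.1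
  rw [one_div] at hte ht
  exact sub_div_sum_rpow_mem_Ico (fun j => (v j : ℝ)) ⟨i₀, congrArg _ hi₀⟩ hg hgap hδ hte
    (by rwa [hcard, Fintype.card_fin])

theorem stmt_10 (n : ℕ) (hn : 2 ≤ n) (v : Fin n → ℚ) (M : ℚ)
    (hM : IsGreatest (Set.range v) M)
    (μ : ℕ) (hμ : μ = (Finset.univ.filter (fun i => v i = M)).card)
    (hS : (Finset.univ.filter (fun i => v i < M)).Nonempty)
    (g₂ : ℚ)
    (hg₂ : g₂ = M - (Finset.univ.filter (fun i => v i < M)).sup' hS v)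
    (δ t : ℝ) (hδ : 0 < δ)
    (hte : Real.exp (1 / (g₂ : ℝ)) < t)
    (ht : (((n : ℝ) - μ) * (g₂ : ℝ) / (δ * μ)) ^ (1 / (g₂ : ℝ)) < t) :
    0 ≤ (M : ℝ) - (∑ j, (v j : ℝ) * t ^ (v j : ℝ)) / (∑ j, t ^ (v j : ℝ))
      ∧ (M : ℝ) - (∑ j, (v j : ℝ) * t ^ (v j : ℝ)) / (∑ j, t ^ (v j : ℝ)) < δ :=
  stmt_10_general n v M hM μ hμ hS g₂ hg₂ δ t hδ hte ht
end

section
/- Let v ∈ [0,1]^n with M = max_i v_i > 0, multiplicity μ_M, and gap g_2 to the second largest distinct value (assume two distinct values exist). For δ > 0, set Δ = log(1 + δ/M). If u > 1 and e^{u(Δ + g_2)} − e^{u·g_2}·μ_M − (n − μ_M) > 0, then 0 ≤ ||v||_u − M < δ, where ||v||_u = (∑_j v_j^u)^{1/u}. -/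
open Real Finset

theorem stmt_13 (n : ℕ) (hn : 2 ≤ n) (v : Fin n → ℝ)
    (hv : ∀ j, v j ∈ Set.Icc (0 : ℝ) 1)
    (M : ℝ) (hM : IsGreatest (Set.range v) M) (hMpos : 0 < M)
    (μ : ℕ) (hμ : μ = (Finset.univ.filter (fun i => v i = M)).card)
    (hS : (Finset.univ.filter (fun i => v i < M)).Nonempty)
    (hSpos : 0 < (Finset.univ.filter (fun i => v i < M)).sup' hS v)
    (g₂ : ℝ)
    (hg₂ : g₂ = Real.log M - Real.log ((Finset.univ.filter (fun i => v i < M)).sup' hS v))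
    (δ u : ℝ) (hδ : 0 < δ) (hu : 1 < u)
    (hbound : Real.exp (u * (Real.log (1 + δ / M) + g₂))
        - Real.exp (u * g₂) * (μ : ℝ) - ((n : ℝ) - μ) > 0) :
    0 ≤ (∑ j, v j ^ u) ^ (1 / u) - M ∧ (∑ j, v j ^ u) ^ (1 / u) - M < δ := by
  set M2 := (Finset.univ.filter (fun i => v i < M)).sup' hS v with hM2def
  have hupos : (0:ℝ) < u := by linarith
  have hMδ : 0 < M + δ := by linarith
  have hMδM : 0 < (M + δ) / M2 := by positivity
  -- rewrite hbound in terms of rpow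
  have e1 : Real.exp (u * (Real.log (1 + δ / M) + g₂)) = ((M + δ) / M2) ^ u := by
    have hlog : Real.log (1 + δ / M) + g₂ = Real.log ((M + δ) / M2) := by
      rw [hg₂, show (1 + δ / M) = (M + δ) / M by field_simp,
        Real.log_div (by positivity) hMpos.ne',
        Real.log_div hMδ.ne' hSpos.ne']
      ring
    rw [hlog, Real.rpow_def_of_pos hMδM, mul_comm]
  have e2 : Real.exp (u * g₂) = (M / M2) ^ u := by
    rw [hg₂, ← Real.log_div hMpos.ne' hSpos.ne',
      Real.rpow_def_of_pos (by positivity), mul_comm]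
  rw [e1, e2] at hbound
  have hM2u : 0 < M2 ^ u := Real.rpow_pos_of_pos hSpos u
  have h1 : ((M + δ) / M2) ^ u = (M + δ) ^ u / M2 ^ u :=
    Real.div_rpow hMδ.le hSpos.le u
  have h2 : (M / M2) ^ u = M ^ u / M2 ^ u := Real.div_rpow hMpos.le hSpos.le u
  rw [h1, h2] at hbound
  have key : (μ : ℝ) * M ^ u + ((n : ℝ) - μ) * M2 ^ u < (M + δ) ^ u := by
    have h : M ^ u / M2 ^ u * μ + ((n : ℝ) - μ) < (M + δ) ^ u / M2 ^ u := by linarith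
    calc (μ : ℝ) * M ^ u + ((n : ℝ) - μ) * M2 ^ u
        = (M ^ u / M2 ^ u * μ + ((n : ℝ) - μ)) * M2 ^ u := by
          field_simp
      _ < (M + δ) ^ u / M2 ^ u * M2 ^ u := by
          exact mul_lt_mul_of_pos_right h hM2u
      _ = (M + δ) ^ u := div_mul_cancel₀ _ hM2u.ne'
  -- split the sum
  have hle : ∀ i, v i ≤ M := fun i => hM.2 ⟨i, rfl⟩
  have hunion : (Finset.univ.filter (fun i => v i = M)) ∪ (Finset.univ.filter (fun i => v i < M)) = Finset.univ := by
    ext i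
    simp only [Finset.mem_union, Finset.mem_filter, Finset.mem_univ, true_and, iff_true]
    rcases lt_or_eq_of_le (hle i) with h | h
    · exact Or.inr h
    · exact Or.inl h
  have hdisj : Disjoint (Finset.univ.filter (fun i => v i = M)) (Finset.univ.filter (fun i => v i < M)) := by
    rw [Finset.disjoint_left]
    intro i h1' h2'
    simp only [Finset.mem_filter] at h1' h2'
    exact absurd h2'.2 (by rw [h1'.2]; exact lt_irrefl M)
  have hcard : μ + (Finset.univ.filter (fun i => v i < M)).card = n := by
    rw [hμ, ← Finset.card_union_of_disjoint hdisj, hunion, Finset.card_univ, Fintype.card_fin]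
  have hsum_split : ∑ j, v j ^ u
      = ∑ j ∈ Finset.univ.filter (fun i => v i = M), v j ^ u
        + ∑ j ∈ Finset.univ.filter (fun i => v i < M), v j ^ u := by
    rw [← Finset.sum_union hdisj, hunion]
  have hsumA : ∑ j ∈ Finset.univ.filter (fun i => v i = M), v j ^ u = (μ : ℝ) * M ^ u := by
    rw [Finset.sum_congr rfl (fun j hj => by
      rw [(Finset.mem_filter.mp hj).2]), Finset.sum_const, hμ, nsmul_eq_mul]
  have hsumB : ∑ j ∈ Finset.univ.filter (fun i => v i < M), v j ^ u
      ≤ ((n : ℝ) - μ) * M2 ^ u := by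
    have hB : ∀ j ∈ Finset.univ.filter (fun i => v i < M), v j ^ u ≤ M2 ^ u := by
      intro j hj
      exact Real.rpow_le_rpow (hv j).1 (Finset.le_sup' v hj) hupos.le
    calc ∑ j ∈ Finset.univ.filter (fun i => v i < M), v j ^ u
        ≤ ∑ _j ∈ Finset.univ.filter (fun i => v i < M), M2 ^ u := Finset.sum_le_sum hB
      _ = ((Finset.univ.filter (fun i => v i < M)).card : ℝ) * M2 ^ u := by
          rw [Finset.sum_const, nsmul_eq_mul]
      _ = ((n : ℝ) - μ) * M2 ^ u := by
          have : ((Finset.univ.filter (fun i => v i < M)).card : ℝ) = (n : ℝ) - μ := by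
            have := hcard
            push_cast [← this]
            ring
          rw [this]
  have hsum_lt : ∑ j, v j ^ u < (M + δ) ^ u := by
    rw [hsum_split, hsumA]
    linarith
  have hsum_ge : M ^ u ≤ ∑ j, v j ^ u := by
    obtain ⟨i0, hi0⟩ := hM.1
    calc M ^ u = v i0 ^ u := by rw [hi0]
      _ ≤ ∑ j, v j ^ u := Finset.single_le_sum
          (fun j _ => Real.rpow_nonneg (hv j).1 u) (Finset.mem_univ i0)
  have hsum_nonneg : 0 ≤ ∑ j, v j ^ u :=
    Finset.sum_nonneg fun j _ => Real.rpow_nonneg (hv j).1 u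
  have hMu : (M ^ u) ^ (1 / u) = M := by
    rw [← Real.rpow_mul hMpos.le, mul_one_div, div_self hupos.ne', Real.rpow_one]
  have hMδu : ((M + δ) ^ u) ^ (1 / u) = M + δ := by
    rw [← Real.rpow_mul hMδ.le, mul_one_div, div_self hupos.ne', Real.rpow_one]
  constructor
  · have := Real.rpow_le_rpow (Real.rpow_nonneg hMpos.le u) hsum_ge (by positivity : (0:ℝ) ≤ 1 / u)
    rw [hMu] at this
    linarith
  · have := Real.rpow_lt_rpow hsum_nonneg hsum_lt (by positivity : (0:ℝ) < 1 / u)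
    rw [hMδu] at this
    linarith
end

section
/- Let v ∈ ℤ^n with maximum M of multiplicity μ_M. If t > max{n − μ_M, (μ_M + √(μ_M² + 4(n − μ_M)))/2}, then ⌊t^{L_v(t) − ⌊L_v(t)⌋}⌋ = μ_M, where L_v(t) = log_t(∑_j t^{v_j}). -/
open Real Finset

theorem stmt_15 (n : ℕ) (hn : 0 < n) (v : Fin n → ℤ) (M : ℤ)
    (hM : IsGreatest (Set.range v) M)
    (μ : ℕ) (hμ : μ = (Finset.univ.filter (fun i => v i = M)).card)
    (t : ℝ)
    (ht : max ((n : ℝ) - μ) (((μ : ℝ) + Real.sqrt ((μ : ℝ)^2 + 4 * ((n : ℝ) - μ))) / 2) < t) :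
    ⌊t ^ (Real.log (∑ j, t ^ (v j : ℝ)) / Real.log t
        - (⌊Real.log (∑ j, t ^ (v j : ℝ)) / Real.log t⌋ : ℝ))⌋ = (μ : ℤ) := by
  obtain ⟨i0, hi0⟩ := hM.1
  have h1 : (n : ℝ) - μ < t := lt_of_le_of_lt (le_max_left _ _) ht
  have h2 : ((μ : ℝ) + Real.sqrt ((μ : ℝ)^2 + 4 * ((n : ℝ) - μ))) / 2 < t :=
    lt_of_le_of_lt (le_max_right _ _) ht
  have hμ1 : 1 ≤ μ := by
    rw [hμ]
    have : i0 ∈ Finset.univ.filter (fun i => v i = M) := by simp [hi0]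
    exact Finset.card_pos.mpr ⟨i0, this⟩
  have hμn : μ ≤ n := by
    rw [hμ]
    simpa using Finset.card_filter_le Finset.univ (fun i => v i = M)
  have hμnR : (μ : ℝ) ≤ (n : ℝ) := by exact_mod_cast hμn
  have hD : 0 ≤ (μ : ℝ)^2 + 4 * ((n : ℝ) - μ) := by nlinarith
  have hsqge : (μ : ℝ) ≤ Real.sqrt ((μ : ℝ)^2 + 4 * ((n : ℝ) - μ)) := by
    have := Real.sqrt_le_sqrt (show (μ:ℝ)^2 ≤ (μ : ℝ)^2 + 4 * ((n : ℝ) - μ) by nlinarith)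
    rwa [Real.sqrt_sq (by positivity)] at this
  have htμ : (μ : ℝ) < t := by nlinarith [Real.sqrt_nonneg ((μ : ℝ)^2 + 4 * ((n : ℝ) - μ))]
  have ht1 : 1 < t := lt_of_le_of_lt (by exact_mod_cast hμ1) htμ
  have ht0 : 0 < t := lt_trans zero_lt_one ht1
  -- the quadratic inequality
  have hquad : (μ : ℝ) * t + ((n : ℝ) - μ) < t ^ 2 := by
    have h2t : Real.sqrt ((μ : ℝ)^2 + 4 * ((n : ℝ) - μ)) < 2 * t - μ := by linarith
    have hpos : (0:ℝ) < 2 * t - μ := by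
      have := Real.sqrt_nonneg ((μ : ℝ)^2 + 4 * ((n : ℝ) - μ)); linarith
    have := (Real.sqrt_lt' hpos).mp h2t
    nlinarith
  set S := ∑ j, t ^ (v j : ℝ) with hSdef
  set TM := t ^ (M : ℝ) with hTMdef
  have hTMpos : 0 < TM := Real.rpow_pos_of_pos ht0 _
  set F := Finset.univ.filter (fun i => v i = M) with hF
  -- first sum
  have hterm : ∀ i ∈ F, t ^ (v i : ℝ) = TM := by
    intro i hi
    rw [hF, Finset.mem_filter] at hi
    rw [hi.2, hTMdef]
  have hsumF : ∑ i ∈ F, t ^ (v i : ℝ) = (μ : ℝ) * TM := by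
    rw [Finset.sum_congr rfl hterm, Finset.sum_const, nsmul_eq_mul, ← hμ]
  -- second sum bound
  have hsumG : ∑ i ∈ Finset.univ.filter (fun i => ¬ v i = M), t ^ (v i : ℝ)
      ≤ ((n : ℝ) - μ) * (TM / t) := by
    have hcard : (Finset.univ.filter (fun i => ¬ v i = M)).card = n - μ := by
      have := Finset.card_filter_add_card_filter_not
        (s := Finset.univ) (p := fun i => v i = M)
      simp only [Finset.card_univ, Fintype.card_fin] at this
      rw [hμ, hF]
      omega
    have hbound : ∀ i ∈ Finset.univ.filter (fun i => ¬ v i = M),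
        t ^ (v i : ℝ) ≤ TM / t := by
      intro i hi
      rw [Finset.mem_filter] at hi
      have hvle : v i ≤ M - 1 := by
        have := hM.2 ⟨i, rfl⟩
        omega
      have : (v i : ℝ) ≤ (M : ℝ) - 1 := by exact_mod_cast hvle
      calc t ^ (v i : ℝ) ≤ t ^ ((M : ℝ) - 1) :=
            Real.rpow_le_rpow_of_exponent_le ht1.le this
        _ = TM / t := by rw [hTMdef, Real.rpow_sub ht0, Real.rpow_one]
    calc ∑ i ∈ Finset.univ.filter (fun i => ¬ v i = M), t ^ (v i : ℝ)
        ≤ (Finset.univ.filter (fun i => ¬ v i = M)).card • (TM / t) :=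
          Finset.sum_le_card_nsmul _ _ _ hbound
      _ = ((n : ℝ) - μ) * (TM / t) := by
          rw [hcard, nsmul_eq_mul, Nat.cast_sub hμn]
  have hsplit : ∑ i ∈ F, t ^ (v i : ℝ)
      + ∑ i ∈ Finset.univ.filter (fun i => ¬ v i = M), t ^ (v i : ℝ) = S := by
    rw [hF, hSdef]
    exact Finset.sum_filter_add_sum_filter_not _ _ _
  have hSlow : (μ : ℝ) * TM ≤ S := by
    rw [← hsplit, hsumF]
    have : 0 ≤ ∑ i ∈ Finset.univ.filter (fun i => ¬ v i = M), t ^ (v i : ℝ) :=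
      Finset.sum_nonneg fun i _ => (Real.rpow_pos_of_pos ht0 _).le
    linarith
  have hShigh : S ≤ (μ : ℝ) * TM + ((n : ℝ) - μ) * (TM / t) := by
    rw [← hsplit, hsumF]
    linarith
  set x := S / TM with hxdef
  have hxlow : (μ : ℝ) ≤ x := (le_div_iff₀ hTMpos).mpr hSlow
  have hxhigh : x ≤ (μ : ℝ) + ((n : ℝ) - μ) / t := by
    rw [hxdef, div_le_iff₀ hTMpos]
    calc S ≤ (μ : ℝ) * TM + ((n : ℝ) - μ) * (TM / t) := hShigh
      _ = ((μ : ℝ) + ((n : ℝ) - μ) / t) * TM := by field_simp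
  have hx1 : 1 ≤ x := le_trans (by exact_mod_cast hμ1) hxlow
  have hx0 : 0 < x := lt_of_lt_of_le zero_lt_one hx1
  have hxt : x < t := by
    refine lt_of_le_of_lt hxhigh ?_
    have hlt : ((n : ℝ) - μ) / t < t - μ := by
      rw [div_lt_iff₀ ht0]
      nlinarith
    linarith
  have hxμ1 : x < (μ : ℝ) + 1 := by
    refine lt_of_le_of_lt hxhigh ?_
    have : ((n : ℝ) - μ) / t < 1 := (div_lt_one ht0).mpr h1
    linarith
  have hS : S = x * TM := by
    rw [hxdef, div_mul_cancel₀ _ (ne_of_gt hTMpos)]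
  have hlogt : 0 < Real.log t := Real.log_pos ht1
  have hL : Real.log S / Real.log t = (M : ℝ) + Real.log x / Real.log t := by
    rw [hS, Real.log_mul (ne_of_gt hx0) (ne_of_gt hTMpos), hTMdef, Real.log_rpow ht0]
    field_simp
    ring
  have hfrac0 : 0 ≤ Real.log x / Real.log t := div_nonneg (Real.log_nonneg hx1) hlogt.le
  have hfrac1 : Real.log x / Real.log t < 1 :=
    (div_lt_one hlogt).mpr (Real.log_lt_log hx0 hxt)
  have hfloor : ⌊Real.log S / Real.log t⌋ = M := by
    have h0 : ⌊Real.log x / Real.log t⌋ = 0 := Int.floor_eq_zero_iff.mpr ⟨hfrac0, hfrac1⟩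
    rw [hL, add_comm, Int.floor_add_intCast, h0, zero_add]
  rw [hfloor, hL]
  have : (M : ℝ) + Real.log x / Real.log t - (M : ℝ) = Real.log x / Real.log t := by ring
  rw [this, Real.log_div_log, Real.rpow_logb ht0 (ne_of_gt ht1) hx0]
  rw [Int.floor_eq_iff]
  constructor
  · exact_mod_cast hxlow
  · push_cast; linarith
end

section
/- Let a = (a_0,...,a_n) and b = (b_0,...,b_m) be integer vectors, and fix k with 0 ≤ k ≤ n+m. Let c_k = max over valid i of (a_i + b_{k−i}), and let ℓ_k(t) = ∑_{i} t^{a_i}·t^{b_{k−i}} be the k-th classical convolution coefficient of (t^{a_0},...,t^{a_n}) and (t^{b_0},...,t^{b_m}). If t > max(n,m) + 1, then ⌊log_t(ℓ_k(t))⌋ = c_k. -/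
open Real Finset

theorem stmt_17 (n m k : ℕ) (hk : k ≤ n + m) (a b : ℕ → ℤ)
    (S : Finset ℕ)
    (hSdef : S = (Finset.range (k + 1)).filter (fun i => i ≤ n ∧ k - i ≤ m))
    (hS : S.Nonempty)
    (c : ℤ) (hc : c = S.sup' hS (fun i => a i + b (k - i)))
    (t : ℝ) (ht : (max n m : ℝ) + 1 < t) :
    ⌊Real.log (∑ i ∈ S, t ^ ((a i + b (k - i) : ℤ) : ℝ)) / Real.log t⌋ = c := by
  have hmax0 : (0:ℝ) ≤ (max n m : ℝ) := by positivity
  have ht1 : (1:ℝ) < t := by linarith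
  have ht0 : (0:ℝ) < t := by linarith
  have hlogt : 0 < Real.log t := Real.log_pos ht1
  set f : ℕ → ℝ := fun i => t ^ ((a i + b (k - i) : ℤ) : ℝ) with hf
  have hfpos : ∀ i ∈ S, 0 < f i := fun i _ => Real.rpow_pos_of_pos ht0 _
  -- lower bound
  obtain ⟨i0, hi0, hi0c⟩ := Finset.exists_mem_eq_sup' hS (fun i => a i + b (k - i))
  have hlb : t ^ ((c:ℝ)) ≤ ∑ i ∈ S, f i := by
    have h1 : f i0 ≤ ∑ i ∈ S, f i :=
      Finset.single_le_sum (fun i hi => (hfpos i hi).le) hi0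
    have h2 : t ^ ((c:ℝ)) = f i0 := by
      rw [hc, hi0c]
    rw [h2]; exact h1
  -- card bound
  have hcard : (S.card : ℝ) < t := by
    have hsub : S ⊆ Finset.range (n + 1) := by
      rw [hSdef]
      intro i hi
      simp only [Finset.mem_filter, Finset.mem_range] at hi ⊢
      omega
    have h1 : S.card ≤ n + 1 := by
      simpa using Finset.card_le_card hsub
    have h2 : (S.card : ℝ) ≤ (n:ℝ) + 1 := by exact_mod_cast h1
    have h3 : (n:ℝ) ≤ (max n m : ℝ) := by exact_mod_cast Nat.le_max_left n m
    linarith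
  -- upper bound
  have hub : ∑ i ∈ S, f i < t ^ ((c:ℝ) + 1) := by
    have hle : ∀ i ∈ S, f i ≤ t ^ ((c:ℝ)) := by
      intro i hi
      apply Real.rpow_le_rpow_left_iff ht1 |>.mpr
      have := Finset.le_sup' (fun i => a i + b (k - i)) hi
      rw [← hc] at this
      exact_mod_cast this
    calc ∑ i ∈ S, f i ≤ ∑ _i ∈ S, t ^ ((c:ℝ)) := Finset.sum_le_sum hle
      _ = (S.card : ℝ) * t ^ ((c:ℝ)) := by rw [Finset.sum_const, nsmul_eq_mul]
      _ < t * t ^ ((c:ℝ)) := by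
          apply mul_lt_mul_of_pos_right hcard (Real.rpow_pos_of_pos ht0 _)
      _ = t ^ ((c:ℝ) + 1) := by
          rw [Real.rpow_add ht0, Real.rpow_one]; ring
  have hsum_pos : 0 < ∑ i ∈ S, f i :=
    lt_of_lt_of_le (Real.rpow_pos_of_pos ht0 _) hlb
  rw [Int.floor_eq_iff]
  constructor
  · rw [le_div_iff₀ hlogt]
    have := Real.log_le_log (Real.rpow_pos_of_pos ht0 _) hlb
    rwa [Real.log_rpow ht0] at this
  · rw [div_lt_iff₀ hlogt]
    have := Real.log_lt_log hsum_pos hub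
    rw [Real.log_rpow ht0] at this
    push_cast
    linarith
end
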